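/- arXiv:math/0002104 — 6 statements merged into one kernel-verified Lean document; each statement's English description precedes it below -/
import Mathlib

section
/- Let m₁ be a complex number and l a positive integer. Define Φ(T₁,…,T_l) = ∏_{j=1}^{l} T_j^{(-m₁+1)} (1-T_j)^{-2l} · ∏_{1≤i<j≤l} (T_i-T_j)². If (T₁⁰,…,T_l⁰) is a critical point of Φ (i.e. all partial derivatives of log Φ vanish), then the i-th elementary symmetric polynomial σ_i of T₁⁰,…,T_l⁰ equals binom(l,i) · ∏_{j=1}^{i} (-m₁+1+l-j)/(-m₁-j), provided all numerators and denominators are nonzero. -/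
/-!
For `p = ∏ⱼ (X - Tⱼ)` one has `p''(Tᵢ) = 2 p'(Tᵢ) ∑_{j ≠ i} 1/(Tᵢ - Tⱼ)`, so multiplying the `i`-th
Bethe equation by `p'(Tᵢ) Tᵢ (1 - Tᵢ)` says that `Tᵢ` is a root of Gauss's hypergeometric operator
`x(1-x)p'' + (c - (a+b+1)x)p' - ab p` with `a = -l`, `b = -l - m₁`, `c = 1 - m₁`. Since `a = -deg p`,
this polynomial has degree `< l`; having the `l` distinct roots `Tᵢ`, it vanishes. Comparing
coefficients gives the two-term recurrence `(i+1)(-m₁-(i+1)) σᵢ₊₁ = (l-i)(-m₁+1+l-(i+1)) σᵢ`, which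
with `σ₀ = 1` is solved by the stated product.
-/

open Finset Polynomial Lagrange

namespace Polynomial

variable {R : Type*} [CommRing R]

noncomputable def hypergeometricOperator (a b c : R) (p : R[X]) : R[X] :=
  X * (1 - X) * derivative (derivative p) + (C c - C (a + b + 1) * X) * derivative p
    - C (a * b) * p

theorem coeff_hypergeometricOperator (a b c : R) (p : R[X]) (n : ℕ) :
    (hypergeometricOperator a b c p).coeff n
      = (n + 1) * (n + c) * p.coeff (n + 1) - (n + a) * (n + b) * p.coeff n := by
  have hsplit : X * (1 - X) * derivative (derivative p)
      = X * derivative (derivative p) - X * (X * derivative (derivative p)) := by ring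
  rcases n with _ | _ | n <;>
    simp only [hypergeometricOperator, hsplit, sub_mul, coeff_sub, coeff_add, coeff_C_mul,
      mul_assoc, coeff_X_mul, coeff_X_mul_zero, coeff_derivative] <;>
    push_cast <;> ring

theorem degree_hypergeometricOperator_lt (b c : R) (p : R[X]) :
    (hypergeometricOperator (-(p.natDegree : R)) b c p).degree < p.natDegree := by
  refine (degree_lt_iff_coeff_zero _ _).mpr fun m hm => ?_
  rw [coeff_hypergeometricOperator, coeff_eq_zero_of_natDegree_lt (by omega : p.natDegree < m + 1)]
  rcases hm.eq_or_lt with rfl | hlt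
  · ring
  · rw [coeff_eq_zero_of_natDegree_lt hlt]
    ring

theorem eval_derivative_derivative_X_sub_C_mul (a : R) (g : R[X]) :
    eval a (derivative (derivative ((X - C a) * g))) = 2 * eval a (derivative g) := by
  simp only [derivative_mul, derivative_sub, derivative_X, derivative_C, sub_zero, one_mul,
    derivative_add, eval_add, eval_mul, eval_sub, eval_X, eval_C, sub_self]
  ring

end Polynomial

namespace Lagrange

theorem coeff_nodal_card_sub {R ι : Type*} [CommRing R] (s : Finset ι) (v : ι → R) {i : ℕ}
    (hi : i ≤ #s) :
    (nodal s v).coeff (#s - i) = (-1) ^ i * ∑ t ∈ s.powersetCard i, ∏ j ∈ t, v j := by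
  have hcard : Multiset.card (s.val.map v) = #s := by simp
  have hnodal : nodal s v = ((s.val.map v).map fun t => X - C t).prod := by
    rw [nodal, Finset.prod_eq_multiset_prod, Multiset.map_map]
    rfl
  rw [hnodal, Multiset.prod_X_sub_C_coeff _ (by omega), hcard, Nat.sub_sub_self hi,
    Finset.esymm_map_val]

variable {F ι : Type*} [Field F] [DecidableEq ι] {s : Finset ι} {v : ι → F}

theorem eval_derivative_nodal_of_forall_ne {x : F} (hx : ∀ j ∈ s, x ≠ v j) :
    eval x (derivative (nodal s v)) = eval x (nodal s v) * ∑ j ∈ s, (x - v j)⁻¹ := by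
  rw [derivative_nodal, eval_finsetSum, mul_sum]
  refine sum_congr rfl fun j hj => ?_
  rw [eval_nodal, eval_nodal, ← mul_prod_erase s _ hj, mul_comm,
    inv_mul_cancel_left₀ (sub_ne_zero.mpr (hx j hj))]

theorem eval_derivative_derivative_nodal (hvs : Set.InjOn v s) {i : ι} (hi : i ∈ s) :
    eval (v i) (derivative (derivative (nodal s v)))
      = 2 * eval (v i) (derivative (nodal s v)) * ∑ j ∈ s.erase i, (v i - v j)⁻¹ := by
  have hne : ∀ j ∈ s.erase i, v i ≠ v j := fun j hj hij =>
    (mem_erase.mp hj).1 (hvs (mem_of_mem_erase hj) hi hij.symm)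
  rw [eval_nodal_derivative_eval_node_eq hi, mul_assoc 2, ← eval_derivative_nodal_of_forall_ne hne,
    nodal_eq_mul_nodal_erase hi]
  exact eval_derivative_derivative_X_sub_C_mul _ _

end Lagrange

theorem hypergeometricOperator_nodal_eq_zero_of_bethe {K : Type*} [Field K] {l : ℕ} (m : K)
    (T : Fin l → K) (hT0 : ∀ i, T i ≠ 0) (hT1 : ∀ i, T i ≠ 1) (hT : Function.Injective T)
    (hBethe : ∀ i, (1 - m) / T i + 2 * (l : K) / (1 - T i)
      + ∑ j ∈ univ.erase i, 2 / (T i - T j) = 0) :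
    hypergeometricOperator (-(l : K)) (-l - m) (1 - m) (nodal univ T) = 0 := by
  have hdeg : (nodal univ T).natDegree = l := by simp
  refine eq_zero_of_degree_lt_of_eval_index_eq_zero univ hT.injOn ?_ fun i _ => ?_
  · simpa [hdeg] using degree_hypergeometricOperator_lt (-l - m) (1 - m) (nodal univ T)
  · have h0 := hT0 i
    have h1 : 1 - T i ≠ 0 := sub_ne_zero.mpr (hT1 i).symm
    have hsum : ∑ j ∈ univ.erase i, 2 / (T i - T j) = 2 * ∑ j ∈ univ.erase i, (T i - T j)⁻¹ := by
      simp only [mul_sum, div_eq_mul_inv]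
    -- the operator at `T i` is `p'(T i) * (T i * (1 - T i))` times the `i`-th Bethe equation
    rw [← mul_zero (eval (T i) (derivative (nodal univ T)) * (T i * (1 - T i))), ← hBethe i, hsum]
    simp only [hypergeometricOperator, eval_sub, eval_add, eval_mul, eval_X, eval_C, eval_one,
      eval_derivative_derivative_nodal hT.injOn (mem_univ i), eval_nodal_at_node (mem_univ i)]
    field_simp
    ring

theorem esymm_recurrence_of_hypergeometricOperator_nodal_eq_zero {R ι : Type*} [CommRing R]
    {s : Finset ι} {v : ι → R} {b c : R}
    (h : hypergeometricOperator (-(#s : R)) b c (nodal s v) = 0) {i : ℕ} (hi : i < #s) :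
    (i + 1) * (#s - i - 1 + b) * ∑ t ∈ s.powersetCard (i + 1), ∏ j ∈ t, v j
      = (#s - i) * (#s - i - 1 + c) * ∑ t ∈ s.powersetCard i, ∏ j ∈ t, v j := by
  have hrec := coeff_hypergeometricOperator (-(#s : R)) b c (nodal s v) (#s - (i + 1))
  rw [h, coeff_zero, show #s - (i + 1) + 1 = #s - i by omega, coeff_nodal_card_sub s v hi.le,
    coeff_nodal_card_sub s v hi, Nat.cast_sub hi, pow_succ] at hrec
  push_cast at hrec
  have hsign : (-1 : R) ^ i * (-1) ^ i = 1 := by rw [← mul_pow]; simp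
  linear_combination (-1 : R) ^ i * hrec
    + ((#s - i) * (#s - i - 1 + c) * ∑ t ∈ s.powersetCard i, ∏ j ∈ t, v j
      - (i + 1) * (#s - i - 1 + b) * ∑ t ∈ s.powersetCard (i + 1), ∏ j ∈ t, v j) * hsign

theorem eq_choose_mul_prod_of_succ_mul_eq {K : Type*} [CommRing K] [IsDomain K] [CharZero K]
    {l : ℕ} {u σ : ℕ → K} (h0 : σ 0 = 1)
    (hsucc : ∀ i < l, (i + 1 : K) * σ (i + 1) = (l - i) * u (i + 1) * σ i) {i : ℕ} (hi : i ≤ l) :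
    σ i = l.choose i * ∏ j ∈ Icc 1 i, u j := by
  induction i with
  | zero => simp [h0]
  | succ i ih =>
    have hchoose : (l.choose (i + 1) : K) * (i + 1) = l.choose i * (l - i) := by
      have h := congrArg (Nat.cast : ℕ → K) (Nat.choose_succ_right_eq l i)
      push_cast [Nat.cast_sub (by omega : i ≤ l)] at h
      exact h
    refine mul_left_cancel₀ (Nat.cast_add_one_ne_zero i : (i + 1 : K) ≠ 0) ?_
    rw [hsucc i hi, ih (by omega), prod_Icc_succ_top (by omega)]
    linear_combination (-u (i + 1) * ∏ j ∈ Icc 1 i, u j) * hchoose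

theorem elementary_symmetric_of_bethe_critical_point_general
    (l : ℕ) (m₁ : ℂ) (T : Fin l → ℂ)
    (hT0 : ∀ i, T i ≠ 0) (hT1 : ∀ i, T i ≠ 1)
    (hTd : ∀ i j, i ≠ j → T i ≠ T j)
    (hBethe : ∀ i, (1 - m₁) / T i + 2 * (l : ℂ) / (1 - T i)
      + ∑ j ∈ univ.erase i, 2 / (T i - T j) = 0)
    (hden : ∀ j ∈ Finset.Icc 1 l, -m₁ - (j : ℂ) ≠ 0) :
    ∀ i ∈ Finset.Icc 1 l,
      ∑ s ∈ Finset.powersetCard i (univ : Finset (Fin l)), ∏ j ∈ s, T j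
        = (Nat.choose l i : ℂ) *
            ∏ j ∈ Finset.Icc 1 i, (-m₁ + 1 + (l : ℂ) - (j : ℂ)) / (-m₁ - (j : ℂ)) := by
  intro i hi
  have hT : Function.Injective T := fun a b hab => by_contra fun hne => hTd a b hne hab
  have hop := hypergeometricOperator_nodal_eq_zero_of_bethe m₁ T hT0 hT1 hT hBethe
  refine eq_choose_mul_prod_of_succ_mul_eq
    (σ := fun n => ∑ s ∈ powersetCard n univ, ∏ j ∈ s, T j) (by simp) (fun k hk => ?_)
    (mem_Icc.mp hi).2
  have hrec := esymm_recurrence_of_hypergeometricOperator_nodal_eq_zero (s := univ) (v := T)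
    (by simpa using hop) (by simpa using hk)
  have hd := hden (k + 1) (mem_Icc.mpr ⟨by omega, by omega⟩)
  simp only [card_univ, Fintype.card_fin] at hrec
  push_cast at hd ⊢
  field_simp
  linear_combination hrec

/-- At a critical point of the 2-particle trigonometric master function
`Φ(T) = ∏ⱼ Tⱼ^(1-m₁) (1-Tⱼ)^(-2l) ∏_{i<j} (Tᵢ-Tⱼ)²` (i.e. a solution of the Bethe
Ansatz equations `∂(log Φ)/∂Tᵢ = 0`), the `i`-th elementary symmetric polynomial of the
coordinates equals `binom(l,i) ∏_{j=1}^{i} (-m₁+1+l-j)/(-m₁-j)`, provided all numerators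
and denominators are nonzero. -/
theorem elementary_symmetric_of_bethe_critical_point
    (l : ℕ) (hl : 0 < l) (m₁ : ℂ) (T : Fin l → ℂ)
    (hT0 : ∀ i, T i ≠ 0) (hT1 : ∀ i, T i ≠ 1)
    (hTd : ∀ i j, i ≠ j → T i ≠ T j)
    (hBethe : ∀ i, (1 - m₁) / T i + 2 * (l : ℂ) / (1 - T i)
      + ∑ j ∈ univ.erase i, 2 / (T i - T j) = 0)
    (hnum : ∀ j ∈ Finset.Icc 1 l, -m₁ + 1 + (l : ℂ) - (j : ℂ) ≠ 0)
    (hden : ∀ j ∈ Finset.Icc 1 l, -m₁ - (j : ℂ) ≠ 0) :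
    ∀ i ∈ Finset.Icc 1 l,
      ∑ s ∈ Finset.powersetCard i (univ : Finset (Fin l)), ∏ j ∈ s, T j
        = (Nat.choose l i : ℂ) *
            ∏ j ∈ Finset.Icc 1 i, (-m₁ + 1 + (l : ℂ) - (j : ℂ)) / (-m₁ - (j : ℂ)) :=
  elementary_symmetric_of_bethe_critical_point_general l m₁ T hT0 hT1 hTd hBethe hden
end

section
/- With the same setup as the 2-particle trigonometric Bethe Ansatz (master function Φ with parameters l ∈ ℤ_{>0} and m₁ ∈ ℂ), at a critical point (T₁⁰,…,T_l⁰) the elementary symmetric polynomials σ̄_i of the shifted variables 1−T₁⁰,…,1−T_l⁰ satisfy σ̄_i = binom(l,i) · ∏_{j=1}^{i} (l+j)/(m₁+j), provided all denominators are nonzero. -/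
open Finset

open Polynomial in
lemma deriv_fin_prod {ι : Type*} [DecidableEq ι] (s : Finset ι) (r : ι → ℂ) :
    derivative (∏ i ∈ s, (X - C (r i))) =
      ∑ i ∈ s, ∏ j ∈ s.erase i, (X - C (r j)) := by
  classical
  induction s using Finset.induction_on with
  | empty => simp
  | @insert a s ha ih =>
    rw [Finset.prod_insert ha, derivative_mul, ih, Finset.sum_insert ha,
      Finset.erase_insert ha]
    simp only [derivative_sub, derivative_X, derivative_C, sub_zero, one_mul]
    rw [Finset.mul_sum]
    congr 1
    apply Finset.sum_congr rfl
    intro b hb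
    rw [Finset.erase_insert_of_ne (by rintro rfl; exact ha hb),
      Finset.prod_insert (fun h => ha (Finset.mem_of_mem_erase h))]

open Polynomial in
lemma ode_coeff (P : ℂ[X]) (A B E : ℂ) (n : ℕ) :
    ((X - X^2) * derivative (derivative P) - (C A + C B * X) * derivative P
      - C E * P).coeff n
    = (((n:ℂ)+1)*(n:ℂ) - A*((n:ℂ)+1)) * P.coeff (n+1)
      - ((n:ℂ)*((n:ℂ)-1) + B*(n:ℂ) + E) * P.coeff n := by
  have hX : ∀ (f : ℂ[X]) (m : ℕ), (X * f).coeff m = ite (1 ≤ m) (f.coeff (m-1)) 0 := by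
    intro f m; simpa using coeff_X_pow_mul' f 1 m
  simp only [coeff_sub, sub_mul, add_mul, coeff_add, hX, coeff_X_pow_mul',
    coeff_C_mul, mul_assoc, coeff_derivative]
  match n with
  | 0 => norm_num
  | 1 => norm_num; ring
  | (m+2) =>
    have h1 : (1:ℕ) ≤ m + 2 := by omega
    have h2 : (2:ℕ) ≤ m + 2 := by omega
    rw [if_pos h1, if_pos h2]
    simp only [Nat.add_sub_cancel, show m+2-1 = m+1 from rfl, coeff_derivative]
    push_cast
    ring

/-- At a critical point of the 2-particle trigonometric master function
`Φ(T) = ∏ⱼ Tⱼ^(1-m₁) (1-Tⱼ)^(-2l) ∏_{i<j} (Tᵢ-Tⱼ)²`, the elementary symmetric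
polynomials `σ̄ᵢ` of the shifted coordinates `1 - T₁⁰, …, 1 - T_l⁰` satisfy
`σ̄ᵢ = binom(l,i) ∏_{j=1}^{i} (l+j)/(m₁+j)`, provided all denominators are nonzero. -/
theorem shifted_elementary_symmetric_of_bethe_critical_point
    (l : ℕ) (hl : 0 < l) (m₁ : ℂ) (T : Fin l → ℂ)
    (hT0 : ∀ i, T i ≠ 0) (hT1 : ∀ i, T i ≠ 1)
    (hTd : ∀ i j, i ≠ j → T i ≠ T j)
    (hBethe : ∀ i, (1 - m₁) / T i + 2 * (l : ℂ) / (1 - T i)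
      + ∑ j ∈ univ.erase i, 2 / (T i - T j) = 0)
    (hden : ∀ j ∈ Finset.Icc 1 l, m₁ + (j : ℂ) ≠ 0) :
    ∀ i ∈ Finset.Icc 1 l,
      ∑ s ∈ Finset.powersetCard i (univ : Finset (Fin l)), ∏ j ∈ s, (1 - T j)
        = (Nat.choose l i : ℂ) *
            ∏ j ∈ Finset.Icc 1 i, ((l : ℂ) + (j : ℂ)) / (m₁ + (j : ℂ)) := by
  classical
  open Polynomial in
  set u : Fin l → ℂ := fun i => 1 - T i with hu
  have hune : ∀ i j, i ≠ j → u i ≠ u j := by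
    intro i j hij h
    exact hTd i j hij (by have : 1 - T i = 1 - T j := h; linear_combination -this)
  have hu0 : ∀ i, u i ≠ 0 := fun i h => hT1 i (by simp [hu] at h; linear_combination -h)
  have hu1 : ∀ i, (1:ℂ) - u i ≠ 0 := fun i h => hT0 i (by simp [hu] at h; linear_combination h)
  set P : ℂ[X] := ∏ j, (X - C (u j)) with hP
  set D1 : ℂ[X] := derivative P with hD1
  set D2 : ℂ[X] := derivative D1 with hD2
  have hProot : ∀ i, P.eval (u i) = 0 := by
    intro i
    rw [hP, eval_prod]
    exact Finset.prod_eq_zero (mem_univ i) (by simp)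
  -- the key analytic identity at each root coming from the Bethe equations
  have hkey : ∀ i, u i * (1 - u i) * D2.eval (u i)
      = ((1-m₁) * u i + 2*(l:ℂ)*(1 - u i)) * D1.eval (u i) := by
    intro i
    set g : ℂ[X] := ∏ j ∈ univ.erase i, (X - C (u j)) with hg
    have hfac : P = (X - C (u i)) * g :=
      (Finset.mul_prod_erase univ _ (mem_univ i)).symm
    have hD1g : D1 = g + (X - C (u i)) * derivative g := by
      rw [hD1, hfac, derivative_mul]; simp
    have hD1e : D1.eval (u i) = g.eval (u i) := by rw [hD1g]; simp
    have hD2e : D2.eval (u i) = 2 * (derivative g).eval (u i) := by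
      have : D2 = derivative g + (derivative g + (X - C (u i)) * derivative (derivative g)) := by
        rw [hD2, hD1g, derivative_add, derivative_mul]; simp
      rw [this]; simp; ring
    set G : ℂ := g.eval (u i) with hG
    have hGprod : G = ∏ j ∈ univ.erase i, (u i - u j) := by
      rw [hG, hg, eval_prod]; simp
    have hGne : G ≠ 0 := by
      rw [hGprod]
      exact Finset.prod_ne_zero_iff.mpr fun j hj =>
        sub_ne_zero.mpr (hune i j (Ne.symm (Finset.mem_erase.mp hj).1))
    set Ev : Fin l → ℂ := fun k => ∏ j ∈ (univ.erase i).erase k, (u i - u j) with hEv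
    set Sv : ℂ := ∑ k ∈ univ.erase i, Ev k with hSvdef
    have hdg : (derivative g).eval (u i) = Sv := by
      rw [hg, deriv_fin_prod, hSvdef]
      simp [hEv, eval_finset_sum, eval_prod]
    have hEk : ∀ k ∈ univ.erase i, (u i - u k) * Ev k = G := by
      intro k hk
      rw [hGprod]
      simp only [hEv]
      exact Finset.mul_prod_erase (univ.erase i) (fun j => u i - u j) hk
    have hB := hBethe i
    have hterm : ∀ j ∈ univ.erase i, (2:ℂ) / (T i - T j) = -(2 * Ev j) / G := by
      intro j hj
      have hne : u i - u j ≠ 0 :=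
        sub_ne_zero.mpr (hune i j (Ne.symm (Finset.mem_erase.mp hj).1))
      have h1 : T i - T j = -(u i - u j) := by simp only [hu]; ring
      rw [h1, div_eq_div_iff (neg_ne_zero.mpr hne) hGne, ← hEk j hj]
      ring
    have hsum : ∑ j ∈ univ.erase i, (2:ℂ)/(T i - T j)
        = (∑ j ∈ univ.erase i, -(2 * Ev j)) / G := by
      rw [Finset.sum_div]; exact Finset.sum_congr rfl hterm
    rw [hsum] at hB
    have hTi : T i = 1 - u i := by simp only [hu]; ring
    rw [hTi] at hB
    have h1ui : (1:ℂ) - (1 - u i) = u i := by ring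
    rw [h1ui] at hB
    have hSv : ∑ j ∈ univ.erase i, -(2 * Ev j) = -(2 * Sv) := by
      rw [hSvdef, Finset.mul_sum, ← Finset.sum_neg_distrib]
    rw [hSv] at hB
    -- clear denominators in hB
    have hB2 : (1-m₁) * u i * G + 2*(l:ℂ)*(1 - u i)*G
        - 2 * Sv * (u i * (1 - u i)) = 0 := by
      field_simp [hu0 i, hu1 i, hGne] at hB
      linear_combination hB
    rw [hD2e, hdg, hD1e]
    linear_combination -hB2
  -- the ODE polynomial
  set Q : ℂ[X] := (X - X^2) * D2 - (C (2*(l:ℂ)) + C (1-m₁-2*(l:ℂ)) * X) * D1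
      - C ((l:ℂ)*((l:ℂ)+m₁)) * P with hQ
  have hQroot : ∀ i, Q.eval (u i) = 0 := by
    intro i
    rw [hQ]
    simp only [eval_sub, eval_mul, eval_add, eval_pow, eval_X, eval_C]
    rw [hProot i]
    linear_combination hkey i
  have hPdeg : P.natDegree = l := by
    rw [hP, Polynomial.natDegree_prod _ _ fun j _ => X_sub_C_ne_zero (u j)]
    simp
  have hbz : ∀ m, l < m → P.coeff m = 0 := fun m hm =>
    Polynomial.coeff_eq_zero_of_natDegree_lt (hPdeg ▸ hm)
  have hQcoeff : ∀ n : ℕ, Q.coeff n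
      = (((n:ℂ)+1)*(n:ℂ) - (2*(l:ℂ))*((n:ℂ)+1)) * P.coeff (n+1)
        - ((n:ℂ)*((n:ℂ)-1) + (1-m₁-2*(l:ℂ))*(n:ℂ) + (l:ℂ)*((l:ℂ)+m₁)) * P.coeff n := by
    intro n
    rw [hQ, hD2, hD1]
    exact ode_coeff P _ _ _ n
  have hQ0 : Q = 0 := by
    apply Polynomial.eq_zero_of_natDegree_lt_card_of_eval_eq_zero Q
      (fun i j h => by by_contra hij; exact hune i j hij h) hQroot
    rw [Fintype.card_fin]
    by_cases hQz : Q = 0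
    · rw [hQz]; simpa using hl
    rw [Polynomial.natDegree_lt_iff_degree_lt hQz, Polynomial.degree_lt_iff_coeff_zero]
    intro m hm
    have hm' : l ≤ m := by exact_mod_cast hm
    have h1 : P.coeff (m+1) = 0 := hbz _ (by omega)
    rw [hQcoeff m, h1]
    rcases eq_or_lt_of_le hm' with rfl | hlt
    · ring
    · rw [hbz m hlt]; ring
  have hrec : ∀ n : ℕ, (((n:ℂ)+1)*(n:ℂ) - (2*(l:ℂ))*((n:ℂ)+1)) * P.coeff (n+1)
      = ((n:ℂ)*((n:ℂ)-1) + (1-m₁-2*(l:ℂ))*(n:ℂ) + (l:ℂ)*((l:ℂ)+m₁)) * P.coeff n := by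
    intro n
    have h := hQcoeff n
    rw [hQ0] at h
    simp only [Polynomial.coeff_zero] at h
    linear_combination -h
  -- Vieta
  have hvieta : ∀ i, i ≤ l → P.coeff (l - i)
      = (-1:ℂ)^i * ∑ t ∈ Finset.powersetCard i (univ : Finset (Fin l)), ∏ j ∈ t, u j := by
    intro i hi
    have hcard : Multiset.card (Multiset.map u univ.val) = l := by simp
    have h1 : P = ((Multiset.map u univ.val).map (fun t => X - C t)).prod := by
      rw [Multiset.map_map]; rfl
    have h2 := Multiset.prod_X_sub_C_coeff (Multiset.map u univ.val)
      (k := l - i) (by rw [hcard]; omega)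
    rw [h1, h2, hcard, show l - (l - i) = i by omega, Finset.esymm_map_val]
  -- main induction
  have main : ∀ i, i ≤ l →
      ∑ t ∈ Finset.powersetCard i (univ : Finset (Fin l)), ∏ j ∈ t, u j
        = (Nat.choose l i : ℂ) * ∏ j ∈ Finset.Icc 1 i, ((l : ℂ) + (j : ℂ)) / (m₁ + (j : ℂ)) := by
    intro i
    induction i with
    | zero => simp
    | succ i ih =>
      intro h
      have hi : i ≤ l := by omega
      have hσi := ih hi
      have hr := hrec (l - (i+1))
      have hc1 : ((l - (i+1) : ℕ) : ℂ) = (l:ℂ) - (i:ℂ) - 1 := by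
        rw [Nat.cast_sub h]; push_cast; ring
      have hc2 : l - (i+1) + 1 = l - i := by omega
      rw [hc1, hc2, hvieta i hi, hvieta (i+1) h] at hr
      have hne1 : ((i:ℂ)+1) ≠ 0 := Nat.cast_add_one_ne_zero i
      have hne2 : m₁ + ((i:ℂ)+1) ≠ 0 := by
        have := hden (i+1) (by rw [Finset.mem_Icc]; omega)
        push_cast at this
        exact this
      have hpne : ((-1:ℂ))^i ≠ 0 := pow_ne_zero _ (by norm_num)
      set σ1 : ℂ := ∑ t ∈ Finset.powersetCard (i+1) (univ : Finset (Fin l)), ∏ j ∈ t, u j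
      set σ0 : ℂ := ∑ t ∈ Finset.powersetCard i (univ : Finset (Fin l)), ∏ j ∈ t, u j
      have hstep : ((i:ℂ)+1) * (m₁ + ((i:ℂ)+1)) * σ1
          = ((l:ℂ)-(i:ℂ)) * ((l:ℂ)+(i:ℂ)+1) * σ0 := by
        apply mul_left_cancel₀ hpne
        linear_combination hr
      -- choose identity
      have hchoose : (Nat.choose l (i+1) : ℂ) * ((i:ℂ)+1)
          = (Nat.choose l i : ℂ) * ((l:ℂ) - (i:ℂ)) := by
        have := Nat.choose_succ_right_eq l i
        have h2 : ((Nat.choose l (i+1) * (i+1) : ℕ) : ℂ) = ((Nat.choose l i * (l - i) : ℕ) : ℂ) := by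
          exact_mod_cast congrArg (Nat.cast (R := ℂ)) this
        push_cast [Nat.cast_sub hi] at h2
        linear_combination h2
      have hd : ((l:ℂ)+((i:ℂ)+1))/(m₁+((i:ℂ)+1)) * (m₁+((i:ℂ)+1)) = (l:ℂ)+((i:ℂ)+1) :=
        div_mul_cancel₀ _ hne2
      rw [Finset.prod_Icc_succ_top (by omega : 1 ≤ i+1)]
      apply mul_left_cancel₀ (mul_ne_zero hne1 hne2)
      rw [hstep, hσi]
      push_cast
      linear_combination (-(((l:ℂ)+(i:ℂ)+1)) * ∏ j ∈ Finset.Icc 1 i, ((l:ℂ)+(j:ℂ))/(m₁+(j:ℂ))) * hchoose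
        - (((i:ℂ)+1) * (Nat.choose l (i+1) : ℂ) * ∏ j ∈ Finset.Icc 1 i, ((l:ℂ)+(j:ℂ))/(m₁+(j:ℂ))) * hd
  intro i hi
  rw [Finset.mem_Icc] at hi
  exact main i hi.2
end

section
/- Let m₁, m₂ ∈ ℂ with m₁, m₂, m₁+m₂ ∉ {0, ±1}. Consider the master function Φ(T₁,T₂,T₃) = (T₁T₂)^{1−m₁} T₃^{1−m₂} ((1−T₁)(1−T₂))^{−3} (T₁−T₂)² (T₁−T₃)^{−1} (T₂−T₃)^{−1}. At any critical point of log Φ, one has T₃⁰ = (m₁+m₂−1)(m₂−1) / ((m₁+m₂+1)(m₂+1)). -/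
/-- At any critical point of the 3-particle, `l = 1` trigonometric master function
`Φ(T₁,T₂,T₃) = (T₁T₂)^(1-m₁) T₃^(1-m₂) ((1-T₁)(1-T₂))^(-3) (T₁-T₂)² (T₁-T₃)⁻¹ (T₂-T₃)⁻¹`
(critical point = solution of the Bethe Ansatz equations `∂(log Φ)/∂Tᵢ = 0`),
the third coordinate is `T₃ = (m₁+m₂-1)(m₂-1)/((m₁+m₂+1)(m₂+1))`. -/
theorem threeParticle_bethe_T3 (m₁ m₂ : ℂ)
    (hm1 : m₁ ∉ ({0, 1, -1} : Set ℂ)) (hm2 : m₂ ∉ ({0, 1, -1} : Set ℂ))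
    (hm12 : m₁ + m₂ ∉ ({0, 1, -1} : Set ℂ))
    (T₁ T₂ T₃ : ℂ)
    (h10 : T₁ ≠ 0) (h11 : T₁ ≠ 1) (h20 : T₂ ≠ 0) (h21 : T₂ ≠ 1) (h30 : T₃ ≠ 0)
    (h12 : T₁ ≠ T₂) (h13 : T₁ ≠ T₃) (h23 : T₂ ≠ T₃)
    (hB1 : (1 - m₁) / T₁ + 3 / (1 - T₁) + 2 / (T₁ - T₂) - 1 / (T₁ - T₃) = 0)
    (hB2 : (1 - m₁) / T₂ + 3 / (1 - T₂) - 2 / (T₁ - T₂) - 1 / (T₂ - T₃) = 0)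
    (hB3 : (1 - m₂) / T₃ + 1 / (T₁ - T₃) + 1 / (T₂ - T₃) = 0) :
    T₃ = (m₁ + m₂ - 1) * (m₂ - 1) / ((m₁ + m₂ + 1) * (m₂ + 1)) := by
  simp only [Set.mem_insert_iff, Set.mem_singleton_iff, not_or] at hm1 hm2 hm12
  obtain ⟨hm10, hm11, hm1n⟩ := hm1
  obtain ⟨hm20, hm21, hm2n⟩ := hm2
  obtain ⟨hm120, hm121, hm12n⟩ := hm12
  have h11' : (1:ℂ) - T₁ ≠ 0 := sub_ne_zero.mpr (Ne.symm h11)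
  have h21' : (1:ℂ) - T₂ ≠ 0 := sub_ne_zero.mpr (Ne.symm h21)
  have h12' : T₁ - T₂ ≠ 0 := sub_ne_zero.mpr h12
  have h13' : T₁ - T₃ ≠ 0 := sub_ne_zero.mpr h13
  have h23' : T₂ - T₃ ≠ 0 := sub_ne_zero.mpr h23
  have hM11 : m₁ - 1 ≠ 0 := sub_ne_zero.mpr hm11
  have hM1p : m₁ + 1 ≠ 0 := fun h => hm1n (by linear_combination h)
  have hM2p : m₂ + 1 ≠ 0 := fun h => hm2n (by linear_combination h)
  have hM12p : m₁ + m₂ + 1 ≠ 0 := fun h => hm12n (by linear_combination h)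
  -- cleared Bethe equations
  have E1 : (1-m₁)*(1-T₁)*(T₁-T₂)*(T₁-T₃) + 3*T₁*(T₁-T₂)*(T₁-T₃)
      + 2*T₁*(1-T₁)*(T₁-T₃) - T₁*(1-T₁)*(T₁-T₂) = 0 := by
    have h : ((1 - m₁) / T₁ + 3 / (1 - T₁) + 2 / (T₁ - T₂) - 1 / (T₁ - T₃))
        * (T₁*(1-T₁)*(T₁-T₂)*(T₁-T₃)) = 0 := by rw [hB1, zero_mul]
    field_simp at h
    linear_combination h
  have E2 : (1-m₁)*(1-T₂)*(T₁-T₂)*(T₂-T₃) + 3*T₂*(T₁-T₂)*(T₂-T₃)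
      - 2*T₂*(1-T₂)*(T₂-T₃) - T₂*(1-T₂)*(T₁-T₂) = 0 := by
    have h : ((1 - m₁) / T₂ + 3 / (1 - T₂) - 2 / (T₁ - T₂) - 1 / (T₂ - T₃))
        * (T₂*(1-T₂)*(T₁-T₂)*(T₂-T₃)) = 0 := by rw [hB2, zero_mul]
    field_simp at h
    linear_combination h
  have E3 : (1-m₂)*(T₁-T₃)*(T₂-T₃) + T₃*(T₂-T₃) + T₃*(T₁-T₃) = 0 := by
    have h : ((1 - m₂) / T₃ + 1 / (T₁ - T₃) + 1 / (T₂ - T₃))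
        * (T₃*(T₁-T₃)*(T₂-T₃)) = 0 := by rw [hB3, zero_mul]
    field_simp at h
    linear_combination h
  -- moment relation A : -(m₁+1)(T₁+T₂) - (m₂+1)T₃ + (2m₁+m₂-3) = 0
  have hEqA : -(m₁+1)*(T₁+T₂) - (m₂+1)*T₃ + (2*m₁+m₂-3) = 0 := by
    have key : (-(m₁+1)*(T₁+T₂) - (m₂+1)*T₃ + (2*m₁+m₂-3))
        * ((T₁-T₂)*((T₁-T₃)*(T₂-T₃))) = 0 := by
      linear_combination (-(T₂-T₃))*E1 + (-(T₁-T₃))*E2 + (-((1-T₃)*(T₁-T₂)))*E3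
    exact (mul_eq_zero.mp key).resolve_right
      (mul_ne_zero h12' (mul_ne_zero h13' h23'))
  -- moment relation 0 : (1-m₁)(T₁+T₂)T₃ + (1-m₂)T₁T₂ + (2m₁+m₂+3)T₁T₂T₃ = 0
  have hEq0 : (1-m₁)*(T₁+T₂)*T₃ + (1-m₂)*(T₁*T₂) + (2*m₁+m₂+3)*(T₁*T₂)*T₃ = 0 := by
    have key : ((1-m₁)*(T₁+T₂)*T₃ + (1-m₂)*(T₁*T₂) + (2*m₁+m₂+3)*(T₁*T₂)*T₃)
        * ((T₁-T₂)*((T₁-T₃)*(T₂-T₃))) = 0 := by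
      linear_combination (T₂*T₃*(T₂-T₃))*E1 + (T₁*T₃*(T₁-T₃))*E2
        + (T₁*T₂*(1-T₃)*(T₁-T₂))*E3
    exact (mul_eq_zero.mp key).resolve_right
      (mul_ne_zero h12' (mul_ne_zero h13' h23'))
  -- key factorized relation : goal * lin * T₃ = 0
  have hGLU : ((m₁+m₂+1)*(m₂+1)*T₃ - (m₁+m₂-1)*(m₂-1))
      * (((2*m₁+m₂+3)*T₃ - (2*m₁+m₂-3)) * T₃) = 0 := by
    linear_combination
      (-((m₁+1)*((1-m₂)+(2*m₁+m₂+3)*T₃)))*E3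
      + ((1-m₂)*(m₁+1))*hEq0
      + (-((1-m₂)*(m₁-1)*T₃ - (1-m₂)*T₃*((1-m₂)+(2*m₁+m₂+3)*T₃)
          + T₃*((1-m₂)+(2*m₁+m₂+3)*T₃)))*hEqA
  by_cases hg : (m₁+m₂+1)*(m₂+1)*T₃ - (m₁+m₂-1)*(m₂-1) = 0
  · have hD : (m₁+m₂+1)*(m₂+1) ≠ 0 := mul_ne_zero hM12p hM2p
    field_simp
    linear_combination hg
  · exfalso
    have hlin : (2*m₁+m₂+3)*T₃ - (2*m₁+m₂-3) = 0 := by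
      rcases mul_eq_zero.mp hGLU with h | h
      · exact absurd h hg
      · exact (mul_eq_zero.mp h).resolve_right h30
    -- discriminant relation : (m₁+1)^2 * Dp * (T₁-T₂)^2 = 0
    have hDisc : (m₁+1)^2*((1-m₂)+(2*m₁+m₂+3)*T₃)*(T₁-T₂)^2 = 0 := by
      linear_combination
        ((3:ℂ) - 4*m₂ + m₂^2 - 2*m₁ + 2*m₁*m₂ + 4*T₃ + 2*T₃*m₂ - 2*T₃*m₂^2
          - 2*T₃*m₁ - 2*T₃*m₁*m₂ + T₃^2 + 2*T₃^2*m₂ + T₃^2*m₂^2)*hlin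
        + (-(((1-m₂)+(2*m₁+m₂+3)*T₃)*((m₁+1)*(T₁+T₂)+(2*m₁+m₂-3-(m₂+1)*T₃))
            - 4*(m₁+1)*(m₁-1)*T₃))*hEqA
        + (-(4:ℂ)*(m₁+1)^2)*hEq0
    have hDp : (1-m₂)+(2*m₁+m₂+3)*T₃ = 0 := by
      rcases mul_eq_zero.mp hDisc with h | h
      · rcases mul_eq_zero.mp h with h' | h'
        · exact absurd h' (pow_ne_zero 2 hM1p)
        · exact h'
      · exact absurd h (pow_ne_zero 2 h12')
    have : (2:ℂ)*(m₁-1) = 0 := by linear_combination hDp - hlin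
    have : m₁ - 1 = 0 := by
      rcases mul_eq_zero.mp this with h | h
      · exact absurd h two_ne_zero
      · exact h
    exact hM11 this
end

section
/- Under the same hypotheses (m₁, m₂, m₁+m₂ ∉ {0,±1}), at any critical point of the 3-particle l=1 master function Φ, the coordinates T₁⁰, T₂⁰ are the two roots of the quadratic equation (m₁+m₂+1)(m₁+1)X² + 2(−m₁²−m₁m₂+2)X + (m₁+m₂−1)(m₁−1) = 0; consequently T₁⁰T₂⁰ = (m₁+m₂−1)(m₁−1)/((m₁+m₂+1)(m₁+1)) and (1−T₁⁰)(1−T₂⁰) = 6/((m₁+m₂+1)(m₁+1)). -/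
private lemma aux_bethe (m₁ m₂ T₁ T₂ T₃ : ℂ)
    (hm1a : m₁ - 1 ≠ 0) (hm1b : m₁ + 1 ≠ 0)
    (h10 : T₁ ≠ 0) (h20 : T₂ ≠ 0) (hd12 : T₁ - T₂ ≠ 0)
    (hQ1 : (T₁ ^ 3 * m₁ + T₁ ^ 3 + (-1 : ℂ) * T₁ ^ 2 * T₂ * m₁ + (-3 : ℂ) * T₁ ^ 2 * T₂ + (-1 : ℂ) * T₁ ^ 2 * T₃ * m₁ + (-1 : ℂ) * T₁ ^ 2 * m₁ + (2 : ℂ) * T₁ ^ 2 + T₁ * T₂ * T₃ * m₁ + (2 : ℂ) * T₁ * T₂ * T₃ + T₁ * T₂ * m₁ + T₁ * T₃ * m₁ + (-3 : ℂ) * T₁ * T₃ + (-1 : ℂ) * T₂ * T₃ * m₁ + T₂ * T₃) = 0)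
    (hQ2 : (T₁ * T₂ ^ 2 * m₁ + (3 : ℂ) * T₁ * T₂ ^ 2 + (-1 : ℂ) * T₁ * T₂ * T₃ * m₁ + (-2 : ℂ) * T₁ * T₂ * T₃ + (-1 : ℂ) * T₁ * T₂ * m₁ + T₁ * T₃ * m₁ + (-1 : ℂ) * T₁ * T₃ + (-1 : ℂ) * T₂ ^ 3 * m₁ + (-1 : ℂ) * T₂ ^ 3 + T₂ ^ 2 * T₃ * m₁ + T₂ ^ 2 * m₁ + (-2 : ℂ) * T₂ ^ 2 + (-1 : ℂ) * T₂ * T₃ * m₁ + (3 : ℂ) * T₂ * T₃) = 0)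
    (hQ3 : ((-1 : ℂ) * T₁ * T₂ * m₂ + T₁ * T₂ + T₁ * T₃ * m₂ + T₂ * T₃ * m₂ + (-1 : ℂ) * T₃ ^ 2 * m₂ + (-1 : ℂ) * T₃ ^ 2) = 0) :
    (m₁ + m₂ + 1) * (m₁ + 1) * T₁ ^ 2 + 2 * (-m₁ ^ 2 - m₁ * m₂ + 2) * T₁
        + (m₁ + m₂ - 1) * (m₁ - 1) = 0 := by
  have hS12 : ((-1 : ℂ) * T₁ * T₂ * m₁ ^ 2 + (-3 : ℂ) * T₁ * T₂ * m₁ + (-2 : ℂ) * T₁ * T₂ + T₁ * m₁ ^ 2 + (-1 : ℂ) * T₁ + T₂ * m₁ ^ 2 + (-1 : ℂ) * T₂ + (-1 : ℂ) * m₁ ^ 2 + (3 : ℂ) * m₁ + (-2 : ℂ)) = 0 := by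
    have h : (T₁ - T₂) ^ 3 * ((-1 : ℂ) * T₁ * T₂ * m₁ ^ 2 + (-3 : ℂ) * T₁ * T₂ * m₁ + (-2 : ℂ) * T₁ * T₂ + T₁ * m₁ ^ 2 + (-1 : ℂ) * T₁ + T₂ * m₁ ^ 2 + (-1 : ℂ) * T₂ + (-1 : ℂ) * m₁ ^ 2 + (3 : ℂ) * m₁ + (-2 : ℂ)) = 0 := by
      linear_combination ((-1 : ℂ) * T₁ * T₂ * m₁ + (-2 : ℂ) * T₁ * T₂ + T₁ * m₁ + (-1 : ℂ) * T₁ + T₂ ^ 2 * m₁ + (-1 : ℂ) * T₂ * m₁ + (3 : ℂ) * T₂) * hQ1 - ((-1 : ℂ) * T₁ ^ 2 * m₁ + T₁ * T₂ * m₁ + (2 : ℂ) * T₁ * T₂ + T₁ * m₁ + (-3 : ℂ) * T₁ + (-1 : ℂ) * T₂ * m₁ + T₂) * hQ2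
    exact (mul_eq_zero.mp h).resolve_left (pow_ne_zero _ hd12)
  have hS23 : (T₁ * T₂ ^ 2 * m₁ ^ 2 + T₁ * T₂ ^ 2 * m₁ * m₂ + (4 : ℂ) * T₁ * T₂ ^ 2 * m₁ + (2 : ℂ) * T₁ * T₂ ^ 2 * m₂ + (4 : ℂ) * T₁ * T₂ ^ 2 + (-2 : ℂ) * T₁ * T₂ * m₁ ^ 2 + (-2 : ℂ) * T₁ * T₂ * m₁ * m₂ + (-2 : ℂ) * T₁ * T₂ * m₁ + (-1 : ℂ) * T₁ * T₂ * m₂ + (4 : ℂ) * T₁ * T₂ + T₁ * m₁ ^ 2 + T₁ * m₁ * m₂ + (-2 : ℂ) * T₁ * m₁ + (-1 : ℂ) * T₁ * m₂ + T₁ + (-1 : ℂ) * T₂ ^ 3 * m₁ ^ 2 + (-1 : ℂ) * T₂ ^ 3 * m₁ * m₂ + (-2 : ℂ) * T₂ ^ 3 * m₁ + (-1 : ℂ) * T₂ ^ 3 * m₂ + (-1 : ℂ) * T₂ ^ 3 + (2 : ℂ) * T₂ ^ 2 * m₁ ^ 2 + (2 : ℂ) * T₂ ^ 2 * m₁ *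 m₂ + (-2 : ℂ) * T₂ ^ 2 * m₁ + (-1 : ℂ) * T₂ ^ 2 * m₂ + (-4 : ℂ) * T₂ ^ 2 + (-1 : ℂ) * T₂ * m₁ ^ 2 + (-1 : ℂ) * T₂ * m₁ * m₂ + (4 : ℂ) * T₂ * m₁ + (2 : ℂ) * T₂ * m₂ + (-4 : ℂ) * T₂) = 0 := by
    have h : ((T₁ - T₂) ^ 2 * T₂) * (T₁ * T₂ ^ 2 * m₁ ^ 2 + T₁ * T₂ ^ 2 * m₁ * m₂ + (4 : ℂ) * T₁ * T₂ ^ 2 * m₁ + (2 : ℂ) * T₁ * T₂ ^ 2 * m₂ + (4 : ℂ) * T₁ * T₂ ^ 2 + (-2 : ℂ) * T₁ * T₂ * m₁ ^ 2 + (-2 : ℂ) * T₁ * T₂ * m₁ * m₂ + (-2 : ℂ) * T₁ * T₂ * m₁ + (-1 : ℂ) * T₁ * T₂ * m₂ + (4 : ℂ) * T₁ * T₂ + T₁ * m₁ ^ 2 + T₁ * m₁ * m₂ + (-2 : ℂ) * T₁ * m₁ + (-1 : ℂ) * T₁ * m₂ + T₁ + (-1 : ℂ) * T₂ ^ 3 *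 m₁ ^ 2 + (-1 : ℂ) * T₂ ^ 3 * m₁ * m₂ + (-2 : ℂ) * T₂ ^ 3 * m₁ + (-1 : ℂ) * T₂ ^ 3 * m₂ + (-1 : ℂ) * T₂ ^ 3 + (2 : ℂ) * T₂ ^ 2 * m₁ ^ 2 + (2 : ℂ) * T₂ ^ 2 * m₁ * m₂ + (-2 : ℂ) * T₂ ^ 2 * m₁ + (-1 : ℂ) * T₂ ^ 2 * m₂ + (-4 : ℂ) * T₂ ^ 2 + (-1 : ℂ) * T₂ * m₁ ^ 2 + (-1 : ℂ) * T₂ * m₁ * m₂ + (4 : ℂ) * T₂ * m₁ + (2 : ℂ) * T₂ * m₂ + (-4 : ℂ) * T₂) = 0 := by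
      linear_combination (T₁ ^ 2 * T₂ ^ 2 * m₁ ^ 2 + (4 : ℂ) * T₁ ^ 2 * T₂ ^ 2 * m₁ + (4 : ℂ) * T₁ ^ 2 * T₂ ^ 2 + (-2 : ℂ) * T₁ ^ 2 * T₂ * m₁ ^ 2 + (-2 : ℂ) * T₁ ^ 2 * T₂ * m₁ + (4 : ℂ) * T₁ ^ 2 * T₂ + T₁ ^ 2 * m₁ ^ 2 + (-2 : ℂ) * T₁ ^ 2 * m₁ + T₁ ^ 2 + (-2 : ℂ) * T₁ * T₂ ^ 3 * m₁ ^ 2 + (-4 : ℂ) * T₁ * T₂ ^ 3 * m₁ + (4 : ℂ) * T₁ * T₂ ^ 2 * m₁ ^ 2 + (-4 : ℂ) * T₁ * T₂ ^ 2 * m₁ + (-12 : ℂ) * T₁ * T₂ ^ 2 + (-2 : ℂ) * T₁ * T₂ * m₁ ^ 2 + (8 : ℂ) * T₁ * T₂ * m₁ + (-6 : ℂ) * T₁ * T₂ + T₂ ^ 4 * m₁ ^ 2 + (-2 : ℂ) * T₂ ^ 3 * m₁ ^ 2 + (6 : ℂ) * T₂ ^ 3 * m₁ + T₂ ^ 2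 * m₁ ^ 2 + (-6 : ℂ) * T₂ ^ 2 * m₁ + (9 : ℂ) * T₂ ^ 2) * hQ3 + (T₁ ^ 2 * T₂ * m₁ * m₂ + (2 : ℂ) * T₁ ^ 2 * T₂ * m₂ + (-1 : ℂ) * T₁ ^ 2 * m₁ * m₂ + T₁ ^ 2 * m₂ + (-1 : ℂ) * T₁ * T₂ ^ 2 * m₁ * m₂ + (-1 : ℂ) * T₁ * T₂ ^ 2 * m₁ + (-1 : ℂ) * T₁ * T₂ ^ 2 * m₂ + (-3 : ℂ) * T₁ * T₂ ^ 2 + (-1 : ℂ) * T₁ * T₂ * T₃ * m₁ * m₂ + (-1 : ℂ) * T₁ * T₂ * T₃ * m₁ + (-2 : ℂ) * T₁ * T₂ * T₃ * m₂ + (-2 : ℂ) * T₁ * T₂ * T₃ + T₁ * T₂ * m₁ * m₂ + T₁ * T₂ * m₁ + (-2 : ℂ) * T₁ * T₂ * m₂ + T₁ * T₃ * m₁ * m₂ + T₁ * T₃ * m₁ + (-1 : ℂ) * T₁ * T₃ * m₂ + (-1 : ℂ) * T₁ * T₃ + T₂ ^ 3 * m₁ + T₂ ^ 3 * m₂ +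 T₂ ^ 3 + T₂ ^ 2 * T₃ * m₁ * m₂ + T₂ ^ 2 * T₃ * m₁ + (-1 : ℂ) * T₂ ^ 2 * m₁ + (-1 : ℂ) * T₂ ^ 2 * m₂ + (2 : ℂ) * T₂ ^ 2 + (-1 : ℂ) * T₂ * T₃ * m₁ * m₂ + (-1 : ℂ) * T₂ * T₃ * m₁ + (3 : ℂ) * T₂ * T₃ * m₂ + (3 : ℂ) * T₂ * T₃) * hQ2
    exact (mul_eq_zero.mp h).resolve_left (mul_ne_zero (pow_ne_zero _ hd12) h20)
  have hE : ((9 : ℂ) * T₁ * (m₁ - 1) * (m₁ + 1)) *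
      ((m₁ + m₂ + 1) * (m₁ + 1) * T₁ ^ 2 + 2 * (-m₁ ^ 2 - m₁ * m₂ + 2) * T₁
        + (m₁ + m₂ - 1) * (m₁ - 1)) = 0 := by
    linear_combination ((-1 : ℂ) * T₁ * m₁ ^ 2 + (-3 : ℂ) * T₁ * m₁ + (-2 : ℂ) * T₁ + m₁ ^ 2 + (-1 : ℂ)) ^ 3 * hS23 - (T₁ ^ 3 * T₂ * m₁ ^ 6 + T₁ ^ 3 * T₂ * m₁ ^ 5 * m₂ + (10 : ℂ) * T₁ ^ 3 * T₂ * m₁ ^ 5 + (8 : ℂ) * T₁ ^ 3 * T₂ * m₁ ^ 4 * m₂ + (41 : ℂ) * T₁ ^ 3 * T₂ * m₁ ^ 4 + (25 : ℂ) * T₁ ^ 3 * T₂ * m₁ ^ 3 * m₂ + (88 : ℂ) * T₁ ^ 3 * T₂ * m₁ ^ 3 + (38 : ℂ) * T₁ ^ 3 * T₂ * m₁ ^ 2 * m₂ + (104 : ℂ) * T₁ ^ 3 * T₂ * m₁ ^ 2 + (28 : ℂ) * T₁ ^ 3 * T₂ * m₁ * m₂ + (64 : ℂ) * T₁ ^ 3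 * T₂ * m₁ + (8 : ℂ) * T₁ ^ 3 * T₂ * m₂ + (16 : ℂ) * T₁ ^ 3 * T₂ + (-1 : ℂ) * T₁ ^ 3 * m₁ ^ 6 + (-1 : ℂ) * T₁ ^ 3 * m₁ ^ 5 * m₂ + (-7 : ℂ) * T₁ ^ 3 * m₁ ^ 5 + (-8 : ℂ) * T₁ ^ 3 * m₁ ^ 4 * m₂ + (-17 : ℂ) * T₁ ^ 3 * m₁ ^ 4 + (-25 : ℂ) * T₁ ^ 3 * m₁ ^ 3 * m₂ + (-13 : ℂ) * T₁ ^ 3 * m₁ ^ 3 + (-38 : ℂ) * T₁ ^ 3 * m₁ ^ 2 * m₂ + (10 : ℂ) * T₁ ^ 3 * m₁ ^ 2 + (-28 : ℂ) * T₁ ^ 3 * m₁ * m₂ + (20 : ℂ) * T₁ ^ 3 * m₁ + (-8 : ℂ) * T₁ ^ 3 * m₂ + (8 : ℂ) * T₁ ^ 3 + (-1 : ℂ) * T₁ ^ 2 * T₂ ^ 2 * m₁ ^ 6 + (-1 : ℂ) * T₁ ^ 2 * T₂ ^ 2 * m₁ ^ 5 * m₂ + (-8 : ℂ) * T₁ ^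 2 * T₂ ^ 2 * m₁ ^ 5 + (-7 : ℂ) * T₁ ^ 2 * T₂ ^ 2 * m₁ ^ 4 * m₂ + (-26 : ℂ) * T₁ ^ 2 * T₂ ^ 2 * m₁ ^ 4 + (-19 : ℂ) * T₁ ^ 2 * T₂ ^ 2 * m₁ ^ 3 * m₂ + (-44 : ℂ) * T₁ ^ 2 * T₂ ^ 2 * m₁ ^ 3 + (-25 : ℂ) * T₁ ^ 2 * T₂ ^ 2 * m₁ ^ 2 * m₂ + (-41 : ℂ) * T₁ ^ 2 * T₂ ^ 2 * m₁ ^ 2 + (-16 : ℂ) * T₁ ^ 2 * T₂ ^ 2 * m₁ * m₂ + (-20 : ℂ) * T₁ ^ 2 * T₂ ^ 2 * m₁ + (-4 : ℂ) * T₁ ^ 2 * T₂ ^ 2 * m₂ + (-4 : ℂ) * T₁ ^ 2 * T₂ ^ 2 + (-1 : ℂ) * T₁ ^ 2 * T₂ * m₁ ^ 6 + (-1 : ℂ) * T₁ ^ 2 * T₂ * m₁ ^ 5 * m₂ + (-9 : ℂ) * T₁ ^ 2 * T₂ * m₁ ^ 5 + (-3 : ℂ) * T₁ ^ 2 * T₂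 * m₁ ^ 4 * m₂ + (-32 : ℂ) * T₁ ^ 2 * T₂ * m₁ ^ 4 + (2 : ℂ) * T₁ ^ 2 * T₂ * m₁ ^ 3 * m₂ + (-54 : ℂ) * T₁ ^ 2 * T₂ * m₁ ^ 3 + (15 : ℂ) * T₁ ^ 2 * T₂ * m₁ ^ 2 * m₂ + (-41 : ℂ) * T₁ ^ 2 * T₂ * m₁ ^ 2 + (17 : ℂ) * T₁ ^ 2 * T₂ * m₁ * m₂ + (-9 : ℂ) * T₁ ^ 2 * T₂ * m₁ + (6 : ℂ) * T₁ ^ 2 * T₂ * m₂ + (2 : ℂ) * T₁ ^ 2 * T₂ + (2 : ℂ) * T₁ ^ 2 * m₁ ^ 6 + (2 : ℂ) * T₁ ^ 2 * m₁ ^ 5 * m₂ + (8 : ℂ) * T₁ ^ 2 * m₁ ^ 5 + (10 : ℂ) * T₁ ^ 2 * m₁ ^ 4 * m₂ + (7 : ℂ) * T₁ ^ 2 * m₁ ^ 4 + (17 : ℂ) * T₁ ^ 2 * m₁ ^ 3 * m₂ + (-4 : ℂ) * T₁ ^ 2 * m₁ ^ 3 + (13 : ℂ) * T₁ ^ 2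 * m₁ ^ 2 * m₂ + (-14 : ℂ) * T₁ ^ 2 * m₁ ^ 2 + (-1 : ℂ) * T₁ ^ 2 * m₁ * m₂ + (-22 : ℂ) * T₁ ^ 2 * m₁ + (-5 : ℂ) * T₁ ^ 2 * m₂ + (-13 : ℂ) * T₁ ^ 2 + (2 : ℂ) * T₁ * T₂ ^ 2 * m₁ ^ 6 + (2 : ℂ) * T₁ * T₂ ^ 2 * m₁ ^ 5 * m₂ + (10 : ℂ) * T₁ * T₂ ^ 2 * m₁ ^ 5 + (8 : ℂ) * T₁ * T₂ ^ 2 * m₁ ^ 4 * m₂ + (16 : ℂ) * T₁ * T₂ ^ 2 * m₁ ^ 4 + (8 : ℂ) * T₁ * T₂ ^ 2 * m₁ ^ 3 * m₂ + (4 : ℂ) * T₁ * T₂ ^ 2 * m₁ ^ 3 + (-4 : ℂ) * T₁ * T₂ ^ 2 * m₁ ^ 2 * m₂ + (-14 : ℂ) * T₁ * T₂ ^ 2 * m₁ ^ 2 + (-10 : ℂ) * T₁ * T₂ ^ 2 * m₁ * m₂ + (-14 : ℂ) * T₁ * T₂ ^ 2 * m₁ + (-4 : ℂ) * T₁ * T₂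 ^ 2 * m₂ + (-4 : ℂ) * T₁ * T₂ ^ 2 + (-1 : ℂ) * T₁ * T₂ * m₁ ^ 6 + (-1 : ℂ) * T₁ * T₂ * m₁ ^ 5 * m₂ + (-6 : ℂ) * T₁ * T₂ * m₁ ^ 4 * m₂ + (13 : ℂ) * T₁ * T₂ * m₁ ^ 4 + (-7 : ℂ) * T₁ * T₂ * m₁ ^ 3 * m₂ + (18 : ℂ) * T₁ * T₂ * m₁ ^ 3 + (3 : ℂ) * T₁ * T₂ * m₁ ^ 2 * m₂ + (-5 : ℂ) * T₁ * T₂ * m₁ ^ 2 + (8 : ℂ) * T₁ * T₂ * m₁ * m₂ + (-18 : ℂ) * T₁ * T₂ * m₁ + (3 : ℂ) * T₁ * T₂ * m₂ + (-7 : ℂ) * T₁ * T₂ + (-1 : ℂ) * T₁ * m₁ ^ 6 + (-1 : ℂ) * T₁ * m₁ ^ 5 * m₂ + (-1 : ℂ) * T₁ * m₁ ^ 5 + (-2 : ℂ) * T₁ * m₁ ^ 4 * m₂ + T₁ * m₁ ^ 4 + (-1 : ℂ) * T₁ * m₁ ^ 3 * m₂ + (-1 : ℂ) * T₁ * m₁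 ^ 3 + (-2 : ℂ) * T₁ * m₁ ^ 2 * m₂ + (4 : ℂ) * T₁ * m₁ ^ 2 + (2 : ℂ) * T₁ * m₁ * m₂ + (2 : ℂ) * T₁ * m₁ + (4 : ℂ) * T₁ * m₂ + (-4 : ℂ) * T₁ + (-1 : ℂ) * T₂ ^ 2 * m₁ ^ 6 + (-1 : ℂ) * T₂ ^ 2 * m₁ ^ 5 * m₂ + (-2 : ℂ) * T₂ ^ 2 * m₁ ^ 5 + (-1 : ℂ) * T₂ ^ 2 * m₁ ^ 4 * m₂ + T₂ ^ 2 * m₁ ^ 4 + (2 : ℂ) * T₂ ^ 2 * m₁ ^ 3 * m₂ + (4 : ℂ) * T₂ ^ 2 * m₁ ^ 3 + (2 : ℂ) * T₂ ^ 2 * m₁ ^ 2 * m₂ + T₂ ^ 2 * m₁ ^ 2 + (-1 : ℂ) * T₂ ^ 2 * m₁ * m₂ + (-2 : ℂ) * T₂ ^ 2 * m₁ + (-1 : ℂ) * T₂ ^ 2 * m₂ + (-1 : ℂ) * T₂ ^ 2 + T₂ * m₁ ^ 6 + T₂ * m₁ ^ 5 * m₂ + (-1 : ℂ) * T₂ *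 m₁ ^ 5 + T₂ * m₁ ^ 4 * m₂ + (-4 : ℂ) * T₂ * m₁ ^ 4 + (-2 : ℂ) * T₂ * m₁ ^ 3 * m₂ + (2 : ℂ) * T₂ * m₁ ^ 3 + (-2 : ℂ) * T₂ * m₁ ^ 2 * m₂ + (5 : ℂ) * T₂ * m₁ ^ 2 + T₂ * m₁ * m₂ + (-1 : ℂ) * T₂ * m₁ + T₂ * m₂ + (-2 : ℂ) * T₂) * hS12
  refine (mul_eq_zero.mp hE).resolve_left ?_
  exact mul_ne_zero (mul_ne_zero (mul_ne_zero (by norm_num) h10) hm1a) hm1b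

/-- At any critical point of the 3-particle, `l = 1` trigonometric master function,
`T₁, T₂` are roots of `(m₁+m₂+1)(m₁+1)X² + 2(-m₁²-m₁m₂+2)X + (m₁+m₂-1)(m₁-1) = 0`;
consequently `T₁T₂ = (m₁+m₂-1)(m₁-1)/((m₁+m₂+1)(m₁+1))` and
`(1-T₁)(1-T₂) = 6/((m₁+m₂+1)(m₁+1))`. -/
theorem threeParticle_bethe_T1T2 (m₁ m₂ : ℂ)
    (hm1 : m₁ ∉ ({0, 1, -1} : Set ℂ)) (hm2 : m₂ ∉ ({0, 1, -1} : Set ℂ))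
    (hm12 : m₁ + m₂ ∉ ({0, 1, -1} : Set ℂ))
    (T₁ T₂ T₃ : ℂ)
    (h10 : T₁ ≠ 0) (h11 : T₁ ≠ 1) (h20 : T₂ ≠ 0) (h21 : T₂ ≠ 1) (h30 : T₃ ≠ 0)
    (h12 : T₁ ≠ T₂) (h13 : T₁ ≠ T₃) (h23 : T₂ ≠ T₃)
    (hB1 : (1 - m₁) / T₁ + 3 / (1 - T₁) + 2 / (T₁ - T₂) - 1 / (T₁ - T₃) = 0)
    (hB2 : (1 - m₁) / T₂ + 3 / (1 - T₂) - 2 / (T₁ - T₂) - 1 / (T₂ - T₃) = 0)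
    (hB3 : (1 - m₂) / T₃ + 1 / (T₁ - T₃) + 1 / (T₂ - T₃) = 0) :
    ((m₁ + m₂ + 1) * (m₁ + 1) * T₁ ^ 2 + 2 * (-m₁ ^ 2 - m₁ * m₂ + 2) * T₁
        + (m₁ + m₂ - 1) * (m₁ - 1) = 0) ∧
    ((m₁ + m₂ + 1) * (m₁ + 1) * T₂ ^ 2 + 2 * (-m₁ ^ 2 - m₁ * m₂ + 2) * T₂
        + (m₁ + m₂ - 1) * (m₁ - 1) = 0) ∧
    T₁ * T₂ = (m₁ + m₂ - 1) * (m₁ - 1) / ((m₁ + m₂ + 1) * (m₁ + 1)) ∧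
    (1 - T₁) * (1 - T₂) = 6 / ((m₁ + m₂ + 1) * (m₁ + 1)) := by
  simp only [Set.mem_insert_iff, Set.mem_singleton_iff, not_or] at hm1 hm2 hm12
  obtain ⟨hm10, hm11, hm1n⟩ := hm1
  obtain ⟨hm120, hm121, hm12n⟩ := hm12
  have hm1a : m₁ - 1 ≠ 0 := sub_ne_zero.mpr hm11
  have hm1b : m₁ + 1 ≠ 0 := by intro h; exact hm1n (by linear_combination h)
  have hm12b : m₁ + m₂ + 1 ≠ 0 := by intro h; exact hm12n (by linear_combination h)
  have hK : (m₁ + m₂ + 1) * (m₁ + 1) ≠ 0 := mul_ne_zero hm12b hm1b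
  have hd12 : T₁ - T₂ ≠ 0 := sub_ne_zero.mpr h12
  have hd13 : T₁ - T₃ ≠ 0 := sub_ne_zero.mpr h13
  have hd23 : T₂ - T₃ ≠ 0 := sub_ne_zero.mpr h23
  have h1a : (1 : ℂ) - T₁ ≠ 0 := sub_ne_zero.mpr (Ne.symm h11)
  have h1b : (1 : ℂ) - T₂ ≠ 0 := sub_ne_zero.mpr (Ne.symm h21)
  have hQ1 : (T₁ ^ 3 * m₁ + T₁ ^ 3 + (-1 : ℂ) * T₁ ^ 2 * T₂ * m₁ + (-3 : ℂ) * T₁ ^ 2 * T₂ + (-1 : ℂ) * T₁ ^ 2 * T₃ * m₁ + (-1 : ℂ) * T₁ ^ 2 * m₁ + (2 : ℂ) * T₁ ^ 2 + T₁ * T₂ * T₃ * m₁ + (2 : ℂ) * T₁ * T₂ * T₃ + T₁ * T₂ * m₁ + T₁ * T₃ * m₁ + (-3 : ℂ) * T₁ * T₃ + (-1 : ℂ) * T₂ * T₃ * m₁ + T₂ * T₃) = 0 := by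
    field_simp at hB1
    linear_combination hB1
  have hQ2 : (T₁ * T₂ ^ 2 * m₁ + (3 : ℂ) * T₁ * T₂ ^ 2 + (-1 : ℂ) * T₁ * T₂ * T₃ * m₁ + (-2 : ℂ) * T₁ * T₂ * T₃ + (-1 : ℂ) * T₁ * T₂ * m₁ + T₁ * T₃ * m₁ + (-1 : ℂ) * T₁ * T₃ + (-1 : ℂ) * T₂ ^ 3 * m₁ + (-1 : ℂ) * T₂ ^ 3 + T₂ ^ 2 * T₃ * m₁ + T₂ ^ 2 * m₁ + (-2 : ℂ) * T₂ ^ 2 + (-1 : ℂ) * T₂ * T₃ * m₁ + (3 : ℂ) * T₂ * T₃) = 0 := by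
    field_simp at hB2
    linear_combination hB2
  have hQ3 : ((-1 : ℂ) * T₁ * T₂ * m₂ + T₁ * T₂ + T₁ * T₃ * m₂ + T₂ * T₃ * m₂ + (-1 : ℂ) * T₃ ^ 2 * m₂ + (-1 : ℂ) * T₃ ^ 2) = 0 := by
    field_simp at hB3
    linear_combination hB3
  have hG1 := aux_bethe m₁ m₂ T₁ T₂ T₃ hm1a hm1b h10 h20 hd12 hQ1 hQ2 hQ3
  have hG2 := aux_bethe m₁ m₂ T₂ T₁ T₃ hm1a hm1b h20 h10
    (sub_ne_zero.mpr (Ne.symm h12)) (by linear_combination -hQ2)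
    (by linear_combination -hQ1) (by linear_combination hQ3)
  have hs : (m₁ + m₂ + 1) * (m₁ + 1) * (T₁ + T₂) + 2 * (-m₁ ^ 2 - m₁ * m₂ + 2) = 0 := by
    have h : (T₁ - T₂) * ((m₁ + m₂ + 1) * (m₁ + 1) * (T₁ + T₂)
        + 2 * (-m₁ ^ 2 - m₁ * m₂ + 2)) = 0 := by linear_combination hG1 - hG2
    exact (mul_eq_zero.mp h).resolve_left hd12
  have hp : (m₁ + m₂ + 1) * (m₁ + 1) * (T₁ * T₂) - (m₁ + m₂ - 1) * (m₁ - 1) = 0 := by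
    have h : (T₁ - T₂) * ((m₁ + m₂ + 1) * (m₁ + 1) * (T₁ * T₂)
        - (m₁ + m₂ - 1) * (m₁ - 1)) = 0 := by linear_combination T₂ * hG1 - T₁ * hG2
    exact (mul_eq_zero.mp h).resolve_left hd12
  refine ⟨hG1, hG2, ?_, ?_⟩
  · field_simp
    linear_combination hp
  · field_simp
    linear_combination hp - hs
end

section
/- For l = 1 and m₁ ∉ {0,±1}, let t₁ satisfy e^{−2π√−1 t₁} = (m₁−1)/(m₁+1) and let ψ(s) = e^{π√−1 m₁ s} sin(π(s − t₁))/sin(π s). Then there exists a constant E such that for all s with sin(πs) ≠ 0, −ψ''(s) + (2π²/sin²(πs)) ψ(s) = E ψ(s), i.e. ψ is an eigenfunction of H = −d²/ds² + 2π²/sin²(πs). -/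
open Complex


noncomputable def bvD (m₁ t₁ : ℂ) (z : ℂ) : ℂ :=
  ((Complex.exp (↑Real.pi * I * m₁ * z) * (↑Real.pi * I * m₁ * 1) * Complex.sin (↑Real.pi * (z - t₁))
      + Complex.exp (↑Real.pi * I * m₁ * z) * (Complex.cos (↑Real.pi * (z - t₁)) * (↑Real.pi * 1)))
      * Complex.sin (↑Real.pi * z)
    - Complex.exp (↑Real.pi * I * m₁ * z) * Complex.sin (↑Real.pi * (z - t₁))
      * (Complex.cos (↑Real.pi * z) * (↑Real.pi * 1)))
  / Complex.sin (↑Real.pi * z) ^ 2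

/-- clean formula for the second derivative -/
noncomputable def bvD2 (m₁ t₁ : ℂ) (s : ℂ) : ℂ :=
  (Complex.exp (↑Real.pi * I * m₁ * s) * Complex.sin (↑Real.pi * s)
      * ((↑Real.pi * I * m₁) ^ 2 * Complex.sin (↑Real.pi * (s - t₁))
          + 2 * (↑Real.pi * I * m₁) * ↑Real.pi * Complex.cos (↑Real.pi * (s - t₁)))
      * Complex.sin (↑Real.pi * s) ^ 2
    - Complex.exp (↑Real.pi * I * m₁ * s)
        * (((↑Real.pi * I * m₁) * Complex.sin (↑Real.pi * (s - t₁))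
              + ↑Real.pi * Complex.cos (↑Real.pi * (s - t₁))) * Complex.sin (↑Real.pi * s)
            - ↑Real.pi * Complex.cos (↑Real.pi * s) * Complex.sin (↑Real.pi * (s - t₁)))
        * (2 * ↑Real.pi * Complex.sin (↑Real.pi * s) * Complex.cos (↑Real.pi * s)))
  / Complex.sin (↑Real.pi * s) ^ 4

lemma bv_hasDerivAt (m₁ t₁ : ℂ) (z : ℂ) (hz : Complex.sin (↑Real.pi * z) ≠ 0) :
    HasDerivAt (fun z : ℂ =>
        Complex.exp (↑Real.pi * I * m₁ * z)
          * Complex.sin (↑Real.pi * (z - t₁)) / Complex.sin (↑Real.pi * z))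
      (bvD m₁ t₁ z) z := by
  have h1 : HasDerivAt (fun z : ℂ => ↑Real.pi * I * m₁ * z) (↑Real.pi * I * m₁ * 1) z :=
    (hasDerivAt_id z).const_mul _
  have h2 : HasDerivAt (fun z : ℂ => ↑Real.pi * (z - t₁)) (↑Real.pi * 1) z :=
    ((hasDerivAt_id z).sub_const t₁).const_mul _
  have h3 : HasDerivAt (fun z : ℂ => ↑Real.pi * z) (↑Real.pi * 1) z :=
    (hasDerivAt_id z).const_mul _
  exact ((h1.cexp.mul h2.csin).div h3.csin hz)

lemma bvD_hasDerivAt (m₁ t₁ : ℂ) (s : ℂ) (hs : Complex.sin (↑Real.pi * s) ≠ 0) :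
    HasDerivAt (bvD m₁ t₁) (bvD2 m₁ t₁ s) s := by
  have h1 : HasDerivAt (fun z : ℂ => ↑Real.pi * I * m₁ * z) (↑Real.pi * I * m₁ * 1) s :=
    (hasDerivAt_id s).const_mul _
  have h2 : HasDerivAt (fun z : ℂ => ↑Real.pi * (z - t₁)) (↑Real.pi * 1) s :=
    ((hasDerivAt_id s).sub_const t₁).const_mul _
  have h3 : HasDerivAt (fun z : ℂ => ↑Real.pi * z) (↑Real.pi * 1) s :=
    (hasDerivAt_id s).const_mul _
  have hQ : Complex.sin (↑Real.pi * s) ^ 2 ≠ 0 := pow_ne_zero _ hs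
  have hnum := (((((h1.cexp.mul_const (↑Real.pi * I * m₁ * 1)).mul h2.csin).add
      (h1.cexp.mul (h2.ccos.mul_const (↑Real.pi * 1)))).mul h3.csin).sub
      ((h1.cexp.mul h2.csin).mul (h3.ccos.mul_const (↑Real.pi * 1))))
  have := hnum.div (h3.csin.pow 2) hQ
  refine this.congr_deriv ?_
  unfold bvD2
  norm_num
  ring

lemma bethe_rel (m₁ t₁ : ℂ) (hm1 : m₁ + 1 ≠ 0)
    (ht : Complex.exp (-2 * ↑Real.pi * I * t₁) = (m₁ - 1) / (m₁ + 1)) :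
    Complex.cos (↑Real.pi * t₁) = I * m₁ * Complex.sin (↑Real.pi * t₁) := by
  have hu : Complex.exp (↑Real.pi * t₁ * I) ≠ 0 := Complex.exp_ne_zero _
  have h2 : Complex.exp (-2 * ↑Real.pi * I * t₁) * (m₁ + 1) = m₁ - 1 := by
    rw [ht]; field_simp
  have e1 : Complex.exp (-2 * ↑Real.pi * I * t₁)
      = (Complex.exp (↑Real.pi * t₁ * I))⁻¹ * (Complex.exp (↑Real.pi * t₁ * I))⁻¹ := by
    rw [← Complex.exp_neg, ← Complex.exp_add]; ring_nf
  rw [e1] at h2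
  have eneg : Complex.exp (-(↑Real.pi * t₁) * I) = (Complex.exp (↑Real.pi * t₁ * I))⁻¹ := by
    rw [← Complex.exp_neg]; ring_nf
  rw [Complex.cos, Complex.sin, eneg]
  field_simp at h2 ⊢
  linear_combination h2 + m₁ * (Complex.exp (↑Real.pi * t₁ * I) ^ 2 - 1) * Complex.I_sq

/-- The 2-particle (`l = 1`) trigonometric Bethe vector
`ψ(s) = e^{π√-1 m₁ s} sin(π(s-t₁))/sin(πs)`, with Bethe root `t₁` determined by
`e^{-2π√-1 t₁} = (m₁-1)/(m₁+1)` and `m₁ ∉ {0, ±1}`, is an eigenfunction of the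
Calogero-Sutherland relative-coordinate Hamiltonian `-d²/ds² + 2π²/sin²(πs)`:
there is a constant `E` with `-ψ''(s) + (2π²/sin²(πs))ψ(s) = Eψ(s)` wherever
`sin(πs) ≠ 0`. -/
theorem lame_bethe_vector_is_eigenfunction (m₁ t₁ : ℂ)
    (hm : m₁ ∉ ({0, 1, -1} : Set ℂ))
    (ht : Complex.exp (-2 * ↑Real.pi * I * t₁) = (m₁ - 1) / (m₁ + 1)) :
    ∃ E : ℂ, ∀ s : ℂ, Complex.sin (↑Real.pi * s) ≠ 0 →
      -(deriv (deriv (fun z : ℂ =>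
          Complex.exp (↑Real.pi * I * m₁ * z)
            * Complex.sin (↑Real.pi * (z - t₁)) / Complex.sin (↑Real.pi * z)))) s
        + (2 * (↑Real.pi : ℂ) ^ 2 / Complex.sin (↑Real.pi * s) ^ 2)
            * (Complex.exp (↑Real.pi * I * m₁ * s)
                * Complex.sin (↑Real.pi * (s - t₁)) / Complex.sin (↑Real.pi * s))
      = E * (Complex.exp (↑Real.pi * I * m₁ * s)
                * Complex.sin (↑Real.pi * (s - t₁)) / Complex.sin (↑Real.pi * s)) := by
  have hm1 : m₁ + 1 ≠ 0 := by
    intro h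
    exact hm (by simp [Set.mem_insert_iff]; right; right; linear_combination h)
  have hct := bethe_rel m₁ t₁ hm1 ht
  refine ⟨↑Real.pi ^ 2 * m₁ ^ 2, fun s hs => ?_⟩
  have hcont : Continuous fun z : ℂ => Complex.sin (↑Real.pi * z) := by fun_prop
  have hU : IsOpen {z : ℂ | Complex.sin (↑Real.pi * z) ≠ 0} :=
    isOpen_compl_singleton.preimage hcont
  have heq : (deriv (fun z : ℂ =>
      Complex.exp (↑Real.pi * I * m₁ * z)
        * Complex.sin (↑Real.pi * (z - t₁)) / Complex.sin (↑Real.pi * z)))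
      =ᶠ[nhds s] bvD m₁ t₁ :=
    Filter.eventuallyEq_of_mem (hU.mem_nhds hs) (fun z hz => (bv_hasDerivAt m₁ t₁ z hz).deriv)
  have hd2 : deriv (deriv (fun z : ℂ =>
      Complex.exp (↑Real.pi * I * m₁ * z)
        * Complex.sin (↑Real.pi * (z - t₁)) / Complex.sin (↑Real.pi * z))) s
      = bvD2 m₁ t₁ s := by
    rw [heq.deriv_eq]; exact (bvD_hasDerivAt m₁ t₁ s hs).deriv
  rw [hd2]
  unfold bvD2
  have hsub : ↑Real.pi * (s - t₁) = ↑Real.pi * s - ↑Real.pi * t₁ := by ring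
  rw [hsub, Complex.sin_sub, Complex.cos_sub, hct]
  have hpy : Complex.sin (↑Real.pi * s) ^ 2 + Complex.cos (↑Real.pi * s) ^ 2 = 1 :=
    Complex.sin_sq_add_cos_sq _
  field_simp
  linear_combination
      (2 * Complex.sin (↑Real.pi * t₁) * Complex.cos (↑Real.pi * s)
        - 2 * Complex.sin (↑Real.pi * t₁) * I * m₁ * Complex.sin (↑Real.pi * s)) * hpy
    + (Complex.sin (↑Real.pi * t₁) * m₁ ^ 2 * Complex.sin (↑Real.pi * s) ^ 2 * Complex.cos (↑Real.pi * s)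
        - Complex.sin (↑Real.pi * t₁) * I * m₁ ^ 3 * Complex.sin (↑Real.pi * s) ^ 3) * Complex.I_sq
end

section
/- For N = 2, l = 1, let ω_tri(T;X₁,X₂) = X₁^{m₁/2}X₂^{−m₁/2}(X₁T − X₂)/(X₁ − X₂), let T⁰ = (m₁−1)/(m₁+1), and let Sym^{(1)}ω_tri(T⁰,X) = ω_tri(T⁰; X₁,X₂) + ω_tri(T⁰; X₂,X₁) be the symmetrized Bethe vector; if m₁ is a non-negative integer ≥ 2, then Sym^{(1)}ω_tri(T⁰,X) is divisible by (X₁ − X₂)² in the ring of Laurent polynomials in X₁^{1/2}, X₂^{1/2}. -/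
open Polynomial

theorem key_dvd (k : ℕ) :
    ((X : (Polynomial ℂ)[X]) - C X) ^ 3 ∣
      (C (C (((k:ℂ)+1)/((k:ℂ)+3)) * X ^ (k+3)) - C (X ^ (k+2)) * X
        + C X * X ^ (k+2) - C (C (((k:ℂ)+1)/((k:ℂ)+3))) * X ^ (k+3)) := by
  set Tc : ℂ := ((k:ℂ)+1)/((k:ℂ)+3) with hTc
  have h3 : ((k:ℂ)+3) ≠ 0 := by
    intro h; have := congrArg Complex.re h; simp [Complex.add_re] at this
    norm_cast at this
  have hT : ((k:ℂ)+3) * Tc = (k:ℂ)+1 := by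
    rw [hTc]; field_simp
  have hCT : (Polynomial.C ((k:ℂ)+3)) * Polynomial.C Tc = Polynomial.C ((k:ℂ)+1) := by
    rw [← map_mul, hT]
  have hCT' : ((k : Polynomial ℂ)+3) * Polynomial.C Tc = (k : Polynomial ℂ)+1 := by
    have := hCT
    push_cast at this ⊢
    simpa [map_ofNat] using this
  set p : (Polynomial ℂ)[X] :=
    C (C Tc * X ^ (k+3)) - C (X ^ (k+2)) * X + C X * X ^ (k+2) - C (C Tc) * X ^ (k+3) with hp
  have hp0 : p ≠ 0 := by
    intro h
    have h2 := congrArg (fun q => Polynomial.coeff q (k+3)) h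
    simp [hp, coeff_X_pow, coeff_C, Nat.succ_ne_zero] at h2
    have hTne : Tc ≠ 0 := by
      rw [hTc]
      exact div_ne_zero (Nat.cast_add_one_ne_zero k) h3
    simp only [← map_pow, coeff_C, Nat.succ_ne_zero, if_neg, Nat.add_eq_zero,
      and_false, if_false] at h2
    simp at h2
    exact hTne h2
  have hmult : 2 < p.rootMultiplicity (X : Polynomial ℂ) := by
    apply lt_rootMultiplicity_of_isRoot_iterate_derivative_of_mem_nonZeroDivisors' hp0
    · intro n hn
      interval_cases n
      · simp only [Function.iterate_zero, id]
        simp [IsRoot, hp]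
        ring
      · simp only [Function.iterate_one]
        simp [IsRoot, hp, derivative_pow]
        linear_combination (-(Polynomial.X ^ (k+2))) * hCT'
      · simp only [Function.iterate_succ, Function.iterate_zero, Function.comp, id]
        simp [IsRoot, hp, derivative_pow]
        linear_combination (-(((k : Polynomial ℂ)+2) * Polynomial.X ^ (k+1))) * hCT'
    · intro n hn hn0
      refine mem_nonZeroDivisors_of_ne_zero ?_
      exact_mod_cast Nat.cast_ne_zero.mpr hn0
  calc ((X : (Polynomial ℂ)[X]) - C X) ^ 3
      ∣ ((X : (Polynomial ℂ)[X]) - C X) ^ (p.rootMultiplicity (X : Polynomial ℂ)) :=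
        pow_dvd_pow _ hmult
    _ ∣ p := p.pow_rootMultiplicity_dvd _

lemma aux {F : Type*} [Field F] (n : ℕ) (a b T g : F) (ha : a ≠ 0) (hb : b ≠ 0)
    (hab : a^2 - b^2 ≠ 0) (hba : b^2 - a^2 ≠ 0)
    (hN : T * (a^2)^(n+3) - (a^2)^(n+2)*b^2 + a^2*(b^2)^(n+2) - T*(b^2)^(n+3)
      = (b^2-a^2)^3 * g) :
    a^(n+2)*(b⁻¹)^(n+2)*(T*a^2-b^2)/(a^2-b^2) + b^(n+2)*(a⁻¹)^(n+2)*(T*b^2-a^2)/(b^2-a^2)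
      = (a^2-b^2)^2 * (-g)/(a*b)^(n+2) := by
  rw [div_add_div _ _ hab hba, div_eq_div_iff (mul_ne_zero hab hba)
    (pow_ne_zero _ (mul_ne_zero ha hb))]
  simp only [inv_pow]
  field_simp
  linear_combination (a^(n+2)*b^(n+2)*(b^2-a^2)) * hN


/-- The field of rational functions in two variables `Y₁, Y₂` over `ℂ`; Laurent
polynomials in `Y₁, Y₂` are the elements of the form `g/(Y₁Y₂)^a` with `g` a polynomial. -/
abbrev RatField2 : Type := FractionRing (MvPolynomial (Fin 2) ℂ)

set_option maxHeartbeats 2000000 in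
set_option synthInstance.maxHeartbeats 400000 in
/-- For `N = 2`, `l = 1` and `m₁` an integer `≥ 2`, the symmetrized Bethe vector
`Sym^{(1)} ω_tri(T⁰,X) = ω_tri(T⁰;X₁,X₂) + ω_tri(T⁰;X₂,X₁)` with
`ω_tri(T;X₁,X₂) = X₁^{m₁/2} X₂^{-m₁/2} (X₁T - X₂)/(X₁ - X₂)` and
`T⁰ = (m₁-1)/(m₁+1)` is divisible by `(X₁-X₂)²` in the ring of Laurent polynomials in
`Y₁ = X₁^{1/2}`, `Y₂ = X₂^{1/2}`: writing `Xᵢ = Yᵢ²`, it equals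
`(Y₁²-Y₂²)² · g / (Y₁Y₂)^a` for some polynomial `g` and some `a : ℕ`. -/
theorem symmetrized_bethe_vector_divisible (m₁ : ℕ) (hm : 2 ≤ m₁) :
    ∃ (g : MvPolynomial (Fin 2) ℂ) (a : ℕ),
      (let y : Fin 2 → RatField2 :=
        fun i => algebraMap (MvPolynomial (Fin 2) ℂ) RatField2 (MvPolynomial.X i);
      let T : RatField2 := algebraMap (MvPolynomial (Fin 2) ℂ) RatField2
        (MvPolynomial.C (((m₁ : ℂ) - 1) / ((m₁ : ℂ) + 1)));
      let ω : RatField2 → RatField2 → RatField2 := fun Y₁ Y₂ =>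
        Y₁ ^ m₁ * (Y₂⁻¹) ^ m₁ * (T * Y₁ ^ 2 - Y₂ ^ 2) / (Y₁ ^ 2 - Y₂ ^ 2);
      ω (y 0) (y 1) + ω (y 1) (y 0)
        = ((y 0) ^ 2 - (y 1) ^ 2) ^ 2
            * algebraMap (MvPolynomial (Fin 2) ℂ) RatField2 g / (y 0 * y 1) ^ a) := by
  obtain ⟨k, rfl⟩ : ∃ k, m₁ = k + 2 := ⟨m₁ - 2, by omega⟩
  clear hm
  set Tc : ℂ := ((k:ℂ)+1)/((k:ℂ)+3) with hTc
  -- the statement's constant equals Tc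
  have hTeq : (((k+2 : ℕ) : ℂ) - 1) / (((k+2 : ℕ) : ℂ) + 1) = Tc := by
    rw [hTc]; push_cast; ring_nf
  obtain ⟨q, hq⟩ := key_dvd k
  -- transfer to MvPolynomial
  set φ : (Polynomial ℂ)[X] →+* MvPolynomial (Fin 2) ℂ :=
    Polynomial.eval₂RingHom
      (Polynomial.eval₂RingHom (MvPolynomial.C : ℂ →+* MvPolynomial (Fin 2) ℂ)
        (MvPolynomial.X 0 ^ 2)) (MvPolynomial.X 1 ^ 2) with hφ
  have hN := congrArg φ hq
  simp only [map_sub, map_add, map_mul, map_pow, hφ,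
    Polynomial.coe_eval₂RingHom, Polynomial.eval₂_C, Polynomial.eval₂_X,
    Polynomial.eval₂_mul, Polynomial.eval₂_pow, Polynomial.eval₂_sub] at hN
  refine ⟨-(φ q), k + 2, ?_⟩
  intro y T ω
  have hinj : Function.Injective (algebraMap (MvPolynomial (Fin 2) ℂ) RatField2) :=
    IsFractionRing.injective _ _
  set A := algebraMap (MvPolynomial (Fin 2) ℂ) RatField2 with hA
  have hU : y 0 ≠ 0 := (map_ne_zero_iff A hinj).mpr (MvPolynomial.X_ne_zero 0)
  have hV : y 1 ≠ 0 := (map_ne_zero_iff A hinj).mpr (MvPolynomial.X_ne_zero 1)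
  have hsub : (MvPolynomial.X 0 ^ 2 - MvPolynomial.X 1 ^ 2 : MvPolynomial (Fin 2) ℂ) ≠ 0 := by
    intro h
    have h2 := congrArg (MvPolynomial.eval (fun i : Fin 2 => if i = 0 then (1:ℂ) else 0)) h
    simp at h2
  have hUV : y 0 ^ 2 - y 1 ^ 2 ≠ 0 := by
    have h2 := (map_ne_zero_iff A hinj).mpr hsub
    simpa only [map_sub, map_pow] using h2
  have hVU : y 1 ^ 2 - y 0 ^ 2 ≠ 0 := by
    intro h; exact hUV (by linear_combination -h)
  have hNA := congrArg A hN
  simp only [map_sub, map_add, map_mul, map_pow, map_neg] at hNA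
  simp only [ω, y, T, hTeq, map_neg, map_neg, hφ, Polynomial.coe_eval₂RingHom] at hU hV hUV hVU ⊢
  rw [← hA]
  exact aux k _ _ _ _ hU hV hUV hVU hNA
end
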